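/- Let p be an odd prime and P ∈ Z_p[x] a nonzero polynomial with Weierstrass decomposition P = u·p^μ·(x^λ + p·R) where u is a unit of Z_p[[x]], R ∈ Z_p[x] has degree < λ. If λ < p^{n-1}(p-1) and ζ is a primitive p^n-th root of unity (n ≥ 1), then P(ζ - 1) ≠ 0 and ord_p(P(ζ - 1)) = μ + λ/(p^{n-1}(p-1)). -/

import Mathlib

open Polynomial PowerSeries

/-- Weierstrass decomposition with invariants `μ` and `λ`:
`F = u · p^μ · (X^λ + p·R)` with `u` a unit of `ℤ_p⟦X⟧` and `deg R < λ`. -/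
def IsWeier (p : ℕ) [Fact p.Prime] (F : PowerSeries ℤ_[p]) (μ lam : ℕ) : Prop :=
  ∃ (u : (PowerSeries ℤ_[p])ˣ) (R : Polynomial ℤ_[p]), R.degree < (lam : ℕ) ∧
    F = (u : PowerSeries ℤ_[p]) *
      ((p : PowerSeries ℤ_[p]) ^ μ *
        (PowerSeries.X ^ lam + (p : PowerSeries ℤ_[p]) * (R : PowerSeries ℤ_[p])))


variable {p : ℕ} [Fact p.Prime]

lemma pdvd_coeff_of_high_vanish (lam : ℕ) (R : Polynomial ℤ_[p]) (s : PowerSeries ℤ_[p])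
    (h : ∀ k, lam ≤ k → PowerSeries.coeff k
      (((Polynomial.X ^ lam + Polynomial.C (p : ℤ_[p]) * R : Polynomial ℤ_[p]) :
        PowerSeries ℤ_[p]) * s) = 0) :
    ∀ i, (p : ℤ_[p]) ∣ PowerSeries.coeff i s := by
  intro i
  have hk := h (lam + i) (Nat.le_add_right _ _)
  rw [Polynomial.coe_add, Polynomial.coe_pow, Polynomial.coe_X, Polynomial.coe_mul,
    Polynomial.coe_C, add_mul, map_add, show lam + i = i + lam from Nat.add_comm _ _,
    PowerSeries.coeff_X_pow_mul, mul_assoc, PowerSeries.coeff_C_mul] at hk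
  exact ⟨-(PowerSeries.coeff (i + lam) ((R : PowerSeries ℤ_[p]) * s)), by linear_combination hk⟩

lemma eliminate (lam : ℕ) (R : Polynomial ℤ_[p]) (t : PowerSeries ℤ_[p])
    (h : ∀ k, lam ≤ k → PowerSeries.coeff k
      (((Polynomial.X ^ lam + Polynomial.C (p : ℤ_[p]) * R : Polynomial ℤ_[p]) :
        PowerSeries ℤ_[p]) * t) = 0) :
    t = 0 := by
  have hpne : (p : ℤ_[p]) ≠ 0 := Nat.cast_ne_zero.mpr (Fact.out : p.Prime).ne_zero
  have key : ∀ j : ℕ, ∃ s : PowerSeries ℤ_[p],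
      t = (PowerSeries.C (p : ℤ_[p])) ^ j * s ∧ ∀ k, lam ≤ k →
        PowerSeries.coeff k
          (((Polynomial.X ^ lam + Polynomial.C (p : ℤ_[p]) * R : Polynomial ℤ_[p]) :
            PowerSeries ℤ_[p]) * s) = 0 := by
    intro j
    induction j with
    | zero => exact ⟨t, by simp, h⟩
    | succ j ih =>
      obtain ⟨s, hs, hcs⟩ := ih
      choose c hc using pdvd_coeff_of_high_vanish lam R s hcs
      have hsc : s = PowerSeries.C (p : ℤ_[p]) * PowerSeries.mk c := by
        ext i
        rw [PowerSeries.coeff_C_mul, PowerSeries.coeff_mk, ← hc i]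
      refine ⟨PowerSeries.mk c, ?_, ?_⟩
      · rw [hs, hsc, pow_succ]; ring
      · intro k hk
        have h2 := hcs k hk
        rw [hsc, mul_left_comm, PowerSeries.coeff_C_mul] at h2
        exact (mul_eq_zero.mp h2).resolve_left hpne
  ext i
  simp only [map_zero]
  by_contra h0
  set x := PowerSeries.coeff i t with hx
  have hdvd : ∀ j : ℕ, (p : ℤ_[p]) ^ j ∣ x := by
    intro j
    obtain ⟨s, hs, -⟩ := key j
    refine ⟨PowerSeries.coeff i s, ?_⟩
    rw [hx, hs, ← map_pow, PowerSeries.coeff_C_mul]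
  have hval : ∀ j : ℕ, (j : ℤ) ≤ x.valuation := by
    intro j
    exact_mod_cast (PadicInt.mem_span_pow_iff_le_valuation x h0 j).mp
      (Ideal.mem_span_singleton.mpr (hdvd j))
  have h1 := hval (x.valuation + 1)
  have h2 := Int.natCast_nonneg x.valuation
  omega

lemma valuation_of_isUnit {w : ℤ_[p]} (hw : IsUnit w) : w.valuation = 0 := by
  have hw0 : w ≠ 0 := hw.ne_zero
  have h2 := Int.natCast_nonneg w.valuation
  by_contra h
  have h1 : ((1 : ℕ) : ℤ) ≤ w.valuation := by omega
  have h3 := (PadicInt.mem_span_pow_iff_le_valuation w hw0 1).mpr (by exact_mod_cast h1)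
  rw [Ideal.mem_span_singleton, pow_one] at h3
  have h4 : IsUnit (p : ℤ_[p]) := isUnit_of_dvd_unit h3 hw
  rw [PadicInt.isUnit_iff, PadicInt.norm_p] at h4
  have h5 : ((p : ℝ)) = 1 := by
    have := congrArg (fun t : ℝ => t⁻¹) h4
    simpa using this
  have := (Fact.out : p.Prime).one_lt
  have : (1 : ℝ) < (p : ℝ) := by exact_mod_cast this
  linarith

lemma nsmul_coe (m : ℕ) (a : ℚ) :
    m • ((a : WithTop ℚ)) = (((m : ℚ) * a : ℚ) : WithTop ℚ) := by
  induction m with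
  | zero => simp
  | succ k ih =>
    rw [succ_nsmul, ih, ← WithTop.coe_add]
    congr 1
    push_cast
    ring

lemma le_aeval {K : Type*} [Field K] [Algebra ℤ_[p] K]
    (v : AddValuation K (WithTop ℚ))
    (hvint : ∀ a : ℤ_[p], a ≠ 0 →
      v (algebraMap ℤ_[p] K a) = ((a.valuation : ℚ) : WithTop ℚ))
    {x : K} {e : ℚ} (he : 0 ≤ e) (hx : v x = (e : WithTop ℚ))
    (A : Polynomial ℤ_[p]) {c : ℚ}
    (hc : ∀ i, A.coeff i ≠ 0 → c ≤ ((A.coeff i).valuation : ℚ)) :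
    (c : WithTop ℚ) ≤ v (Polynomial.aeval x A) := by
  rw [Polynomial.aeval_eq_sum_range]
  apply v.map_le_sum
  intro i _
  by_cases h0 : A.coeff i = 0
  · rw [h0, zero_smul, v.map_zero]
    exact le_top
  · rw [Algebra.smul_def, v.map_mul, v.map_pow, hx, hvint _ h0, nsmul_coe, ← WithTop.coe_add,
      WithTop.coe_le_coe]
    have h1 := hc i h0
    have h2 : 0 ≤ (i : ℚ) * e := by positivity
    linarith


/-- Let `p` be an odd prime and `P ∈ ℤ_p[x]` nonzero with Weierstrass
decomposition `P = u·p^μ·(x^λ + p·R)`, `u ∈ ℤ_p⟦x⟧ˣ`, `deg R < λ`. If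
`λ < p^(n-1)(p-1)` and `ζ` is a primitive `p^n`-th root of unity (`n ≥ 1`), then
`P(ζ-1) ≠ 0` and `ord_p (P(ζ-1)) = μ + λ/(p^(n-1)(p-1))`. -/
theorem valuation_at_zeta_sub_one
    (p : ℕ) [Fact p.Prime] (hp : Odd p)
    (K : Type*) [Field K] [Algebra ℤ_[p] K]
    (v : AddValuation K (WithTop ℚ))
    (hv0 : ∀ x : K, v x = (⊤ : WithTop ℚ) ↔ x = 0)
    (hvint : ∀ a : ℤ_[p], a ≠ 0 →
      v (algebraMap ℤ_[p] K a) = ((a.valuation : ℚ) : WithTop ℚ))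
    (n : ℕ) (hn : 1 ≤ n) (ζ : K) (hζ : IsPrimitiveRoot ζ (p ^ n))
    (hvζ : v (ζ - 1) = (((1 : ℚ) / (p ^ (n - 1) * (p - 1)) : ℚ) : WithTop ℚ))
    (P : Polynomial ℤ_[p]) (hP : P ≠ 0) (μ lam : ℕ)
    (hW : IsWeier p (P : PowerSeries ℤ_[p]) μ lam)
    (hlam : lam < p ^ (n - 1) * (p - 1)) :
    Polynomial.aeval (ζ - 1) P ≠ 0 ∧
      v (Polynomial.aeval (ζ - 1) P)
        = (((μ : ℚ) + (lam : ℚ) / (p ^ (n - 1) * (p - 1)) : ℚ) : WithTop ℚ) := by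
  obtain ⟨u, R, hR, hFeq⟩ := hW
  have hpprime : p.Prime := Fact.out
  have hpne : (p : ℤ_[p]) ≠ 0 := Nat.cast_ne_zero.mpr hpprime.ne_zero
  -- the distinguished polynomial D
  set D : Polynomial ℤ_[p] := Polynomial.X ^ lam + Polynomial.C (p : ℤ_[p]) * R with hDdef
  have hCRdeg : (Polynomial.C (p : ℤ_[p]) * R).degree < (lam : ℕ) :=
    lt_of_le_of_lt (le_trans (Polynomial.degree_mul_le _ _)
      (by have := add_le_add (Polynomial.degree_C_le (a := (p : ℤ_[p]))) (le_refl R.degree); rwa [zero_add] at this)) hR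
  have hDmonic : D.Monic := Polynomial.monic_X_pow_add hCRdeg
  have hDdeg : D.degree = (lam : ℕ) := by
    rw [hDdef, Polynomial.degree_add_eq_left_of_degree_lt (by
      rwa [Polynomial.degree_X_pow]), Polynomial.degree_X_pow]
  -- division with remainder
  set Q : Polynomial ℤ_[p] := P /ₘ D with hQdef
  set r : Polynomial ℤ_[p] := P %ₘ D with hrdef
  have hdiv : r + D * Q = P := Polynomial.modByMonic_add_div P D
  have hrdeg : r.degree < (lam : ℕ) := hDdeg ▸ Polynomial.degree_modByMonic_lt P hDmonic
  -- cast D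
  have hDcast : ((D : Polynomial ℤ_[p]) : PowerSeries ℤ_[p])
      = PowerSeries.X ^ lam + (p : PowerSeries ℤ_[p]) * (R : PowerSeries ℤ_[p]) := by
    rw [hDdef, Polynomial.coe_add, Polynomial.coe_pow, Polynomial.coe_X, Polynomial.coe_mul,
      Polynomial.coe_C, map_natCast]
  have hFeq' : (P : PowerSeries ℤ_[p]) = (D : PowerSeries ℤ_[p]) *
      ((p : PowerSeries ℤ_[p]) ^ μ * (u : PowerSeries ℤ_[p])) := by
    rw [hDcast, hFeq]; ring
  have hdivPS : (P : PowerSeries ℤ_[p]) = (r : PowerSeries ℤ_[p]) +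
      (D : PowerSeries ℤ_[p]) * (Q : PowerSeries ℤ_[p]) := by
    have := congrArg (fun A : Polynomial ℤ_[p] => (A : PowerSeries ℤ_[p])) hdiv
    simp only [Polynomial.coe_add, Polynomial.coe_mul] at this
    exact this.symm
  -- the difference
  set t : PowerSeries ℤ_[p] :=
    (p : PowerSeries ℤ_[p]) ^ μ * (u : PowerSeries ℤ_[p]) - (Q : PowerSeries ℤ_[p]) with htdef
  have hDtr : (D : PowerSeries ℤ_[p]) * t = (r : PowerSeries ℤ_[p]) := by
    rw [htdef]
    linear_combination hdivPS - hFeq'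
  have ht0 : t = 0 := by
    apply eliminate lam R
    intro k hk
    rw [← hDdef, hDtr, Polynomial.coeff_coe,
      Polynomial.coeff_eq_zero_of_degree_lt (lt_of_lt_of_le hrdeg (by exact_mod_cast hk))]
  have hQu : (Q : PowerSeries ℤ_[p]) = (p : PowerSeries ℤ_[p]) ^ μ * (u : PowerSeries ℤ_[p]) :=
    (sub_eq_zero.mp ht0).symm
  have hr0 : r = 0 := by
    have h1 : (r : PowerSeries ℤ_[p]) = 0 := by rw [← hDtr, ht0, mul_zero]
    exact_mod_cast h1
  have hPDQ : P = D * Q := by rw [← hdiv, hr0, zero_add]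
  -- coefficients of Q
  have hQcoeff : ∀ i, Q.coeff i
      = (p : ℤ_[p]) ^ μ * (PowerSeries.coeff i (u : PowerSeries ℤ_[p])) := by
    intro i
    have h1 := congrArg (PowerSeries.coeff i) hQu
    rwa [Polynomial.coeff_coe, ← map_natCast (PowerSeries.C (R := ℤ_[p])) p, ← map_pow,
      PowerSeries.coeff_C_mul] at h1
  have hw : IsUnit (PowerSeries.coeff 0 (u : PowerSeries ℤ_[p])) := by
    rw [PowerSeries.coeff_zero_eq_constantCoeff_apply]
    exact PowerSeries.isUnit_constantCoeff _ u.isUnit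
  have hQ0ne : Q.coeff 0 ≠ 0 := by
    rw [hQcoeff 0]
    exact mul_ne_zero (pow_ne_zero _ hpne) hw.ne_zero
  have hQ0val : (Q.coeff 0).valuation = (μ : ℤ) := by
    rw [hQcoeff 0, PadicInt.valuation_p_pow_mul _ _ hw.ne_zero, valuation_of_isUnit hw, add_zero]
  have hQival : ∀ i, Q.coeff i ≠ 0 → (μ : ℚ) ≤ ((Q.coeff i).valuation : ℚ) := by
    intro i hi
    rw [hQcoeff i] at hi ⊢
    have hci : PowerSeries.coeff i (u : PowerSeries ℤ_[p]) ≠ 0 :=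
      fun h => hi (by rw [h, mul_zero])
    rw [PadicInt.valuation_p_pow_mul _ _ hci]
    have h0 : (0 : ℚ) ≤ (((PowerSeries.coeff i (u : PowerSeries ℤ_[p])).valuation : ℚ)) := by
      exact_mod_cast Nat.zero_le (PowerSeries.coeff i (u : PowerSeries ℤ_[p])).valuation
    push_cast
    linarith
  -- numeric setup
  set x : K := ζ - 1 with hxdef
  set e : ℚ := (1 : ℚ) / ((p : ℚ) ^ (n - 1) * ((p : ℚ) - 1)) with hedef
  have hp2 : (2 : ℚ) ≤ (p : ℚ) := by exact_mod_cast hpprime.two_le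
  have hM : 0 < (p : ℚ) ^ (n - 1) * ((p : ℚ) - 1) := by
    apply mul_pos (pow_pos (by linarith) _)
    linarith
  have he : 0 < e := by rw [hedef]; positivity
  have hlamQ : (lam : ℚ) < (p : ℚ) ^ (n - 1) * ((p : ℚ) - 1) := by
    have := hlam
    have h1 : ((lam : ℚ)) < ((p ^ (n - 1) * (p - 1) : ℕ) : ℚ) := by exact_mod_cast this
    rwa [Nat.cast_mul, Nat.cast_pow, Nat.cast_sub (le_of_lt hpprime.one_lt),
      Nat.cast_one] at h1
  have hlamE : (lam : ℚ) * e < 1 := by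
    rw [hedef, mul_one_div, div_lt_one hM]
    exact hlamQ
  have hvx : v x = (e : WithTop ℚ) := hvζ
  -- valuation of aeval x R
  have hRval : ((0 : ℚ) : WithTop ℚ) ≤ v (Polynomial.aeval x R) := by
    apply le_aeval v hvint (le_of_lt he) hvx
    intro i hi
    exact_mod_cast Nat.zero_le (R.coeff i).valuation
  -- valuation of aeval x D
  have hDval : v (Polynomial.aeval x D) = (((lam : ℚ) * e : ℚ) : WithTop ℚ) := by
    have hsplit : Polynomial.aeval x D
        = x ^ lam + algebraMap ℤ_[p] K (p : ℤ_[p]) * Polynomial.aeval x R := by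
      rw [hDdef]
      simp [Polynomial.aeval_X, Polynomial.aeval_C]
    have hxpow : v (x ^ lam) = (((lam : ℚ) * e : ℚ) : WithTop ℚ) := by
      rw [v.map_pow, hvx, nsmul_coe]
    have hvp : v (algebraMap ℤ_[p] K (p : ℤ_[p])) = (((1 : ℚ)) : WithTop ℚ) := by
      rw [hvint _ hpne, PadicInt.valuation_p]
      norm_num
    have hlt : v (x ^ lam) < v (algebraMap ℤ_[p] K (p : ℤ_[p]) * Polynomial.aeval x R) := by
      rw [hxpow, v.map_mul, hvp]
      calc (((lam : ℚ) * e : ℚ) : WithTop ℚ) < (((1 : ℚ)) : WithTop ℚ) :=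
            WithTop.coe_lt_coe.mpr hlamE
        _ ≤ (((1 : ℚ)) : WithTop ℚ) + v (Polynomial.aeval x R) := by
            apply le_add_of_nonneg_right
            exact_mod_cast hRval
    rw [hsplit, v.map_add_eq_of_lt_left hlt, hxpow]
  -- valuation of aeval x Q
  have hQval : v (Polynomial.aeval x Q) = (((μ : ℚ)) : WithTop ℚ) := by
    rw [Polynomial.aeval_eq_sum_range, Finset.sum_range_succ']
    have hQ0v : v (Q.coeff 0 • x ^ 0) = (((μ : ℚ)) : WithTop ℚ) := by
      rw [pow_zero, Algebra.smul_def, mul_one, hvint _ hQ0ne, (by exact_mod_cast hQ0val : (Q.coeff 0).valuation = μ)]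
    rw [v.map_add_eq_of_lt_right (by
      rw [hQ0v]
      apply v.map_lt_sum (g := ((μ : ℚ) : WithTop ℚ)) WithTop.coe_ne_top
      intro i _
      by_cases hci : Q.coeff (i + 1) = 0
      · rw [hci, zero_smul, v.map_zero]
        exact WithTop.coe_lt_top _
      · rw [Algebra.smul_def, v.map_mul, hvint _ hci, v.map_pow, hvx, nsmul_coe,
          ← WithTop.coe_add, WithTop.coe_lt_coe]
        have h1 := hQival (i + 1) hci
        have h2 : 0 < ((i + 1 : ℕ) : ℚ) * e := by positivity
        linarith)]
    exact hQ0v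
  -- conclusion
  have hvP : v (Polynomial.aeval x P)
      = (((lam : ℚ) * e + (μ : ℚ) : ℚ) : WithTop ℚ) := by
    rw [hPDQ, map_mul, v.map_mul, hDval, hQval, ← WithTop.coe_add]
  have hfinal : ((lam : ℚ) * e + (μ : ℚ) : ℚ)
      = ((μ : ℚ) + (lam : ℚ) / ((p : ℚ) ^ (n - 1) * ((p : ℚ) - 1)) : ℚ) := by
    rw [hedef, mul_one_div]
    ring
  constructor
  · intro h
    have hne : v (Polynomial.aeval x P) ≠ ⊤ := by rw [hvP]; exact WithTop.coe_ne_top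
    exact hne ((hv0 _).mpr h)
  · rw [hvP, hfinal]
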